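/- For all integers m, n, m′, n′ ≥ 1, det A(B_{m,n}) = det A(B_{m′,n′}) if and only if m + n = m′ + n′. -/

import Mathlib

/-- The complete bridge graph `B_{m,n}` on vertex set `Fin (m+n)` (0-indexed version of the
paper's `{1, …, m+n}`): vertices `0, …, m-1` form a complete graph `K_m`, vertices
`m, …, m+n-1` form a complete graph `K_n`, and the only further edge is the bridge joining
vertex `m-1` (the paper's vertex `m`) to vertex `m` (the paper's vertex `m+1`). -/
def bridgeGraph (m n : ℕ) : SimpleGraph (Fin (m + n)) :=
  SimpleGraph.fromRel (fun i j =>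
    ((i : ℕ) < m ∧ (j : ℕ) < m) ∨ (m ≤ (i : ℕ) ∧ m ≤ (j : ℕ)) ∨
      ((i : ℕ) + 1 = m ∧ (j : ℕ) = m))

instance (m n : ℕ) : DecidableRel (bridgeGraph m n).Adj := fun i j =>
  decidable_of_iff (i ≠ j ∧
      ((((i : ℕ) < m ∧ (j : ℕ) < m) ∨ (m ≤ (i : ℕ) ∧ m ≤ (j : ℕ)) ∨
        ((i : ℕ) + 1 = m ∧ (j : ℕ) = m)) ∨
       (((j : ℕ) < m ∧ (i : ℕ) < m) ∨ (m ≤ (j : ℕ) ∧ m ≤ (i : ℕ)) ∨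
        ((j : ℕ) + 1 = m ∧ (i : ℕ) = m)))) Iff.rfl


/-!
Write `a`, `b` for the indicator vectors of the two cliques and `e`, `f` for the standard
basis vectors at the two ends of the bridge. Then `A(B_{m,n}) + 1 = a aᵀ + b bᵀ + e fᵀ + f eᵀ`,
so by the Weinstein–Aronszajn identity `det A(B_{m,n}) = (-1)^(m+n) det (1 - G)` for the
`4 × 4` matrix `G` of dot products of these vectors, which gives `(-1)^(m+n) (m + n - 3)`.
The map `N ↦ (-1)^N (N - 3)` is injective on `ℕ`: its value is odd for even `N` and even for
odd `N`.
-/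

open Matrix Finset

theorem Matrix.det_one_sub_sum_vecMulVec {R ι κ : Type*} [CommRing R] [Fintype ι]
    [DecidableEq ι] [Fintype κ] [DecidableEq κ] (u v : κ → ι → R) :
    det (1 - ∑ k, vecMulVec (u k) (v k)) = det (1 - of fun k l => v k ⬝ᵥ u l) := by
  have hsum : ∑ k, vecMulVec (u k) (v k) = (of fun i k => u k i) * of v := by
    ext i j
    simp [mul_apply, vecMulVec_apply, sum_apply]
  rw [hsum, det_one_sub_mul_comm]
  rfl

def bridgeCellFun {R : Type*} (m : ℕ) (x y z w : R) (i : ℕ) : R :=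
  if i + 1 < m then x else if i + 1 = m then y else if i = m then z else w

theorem sum_range_bridgeCellFun_mul {R : Type*} [CommSemiring R] {m n : ℕ} (hm : 1 ≤ m)
    (hn : 1 ≤ n) (x y z w x' y' z' w' : R) :
    ∑ i ∈ range (m + n), bridgeCellFun m x y z w i * bridgeCellFun m x' y' z' w' i =
      (m - 1 : ℕ) * (x * x') + y * y' + z * z' + (n - 1 : ℕ) * (w * w') := by
  obtain ⟨a, rfl⟩ := Nat.exists_eq_add_of_le' hm
  obtain ⟨b, rfl⟩ := Nat.exists_eq_add_of_le' hn
  rw [show a + 1 + (b + 1) = a + (b + 2) by ring, sum_range_add, sum_range_succ', sum_range_succ']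
  have hleft : ∀ i ∈ range a,
      bridgeCellFun (a + 1) x y z w i * bridgeCellFun (a + 1) x' y' z' w' i = x * x' := by
    intro i hi
    simp [bridgeCellFun, mem_range.mp hi]
  have hright : ∀ k ∈ range b, bridgeCellFun (a + 1) x y z w (a + (k + 1 + 1)) *
      bridgeCellFun (a + 1) x' y' z' w' (a + (k + 1 + 1)) = w * w' := by
    intro k _
    simp [bridgeCellFun]
  rw [sum_congr rfl hleft, sum_congr rfl hright]
  simp [bridgeCellFun]
  ring

def bridgeCellVec {R : Type*} (m n : ℕ) (x y z w : R) : Fin (m + n) → R :=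
  fun i => bridgeCellFun m x y z w i

theorem bridgeCellVec_dotProduct {R : Type*} [CommSemiring R] {m n : ℕ} (hm : 1 ≤ m)
    (hn : 1 ≤ n) (x y z w x' y' z' w' : R) :
    bridgeCellVec m n x y z w ⬝ᵥ bridgeCellVec m n x' y' z' w' =
      (m - 1 : ℕ) * (x * x') + y * y' + z * z' + (n - 1 : ℕ) * (w * w') := by
  rw [dotProduct, ← sum_range_bridgeCellFun_mul hm hn]
  exact Fin.sum_univ_eq_sum_range
    (fun i => bridgeCellFun m x y z w i * bridgeCellFun m x' y' z' w' i) _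

-- In the notation above, these are `![a, b, e, f]` and `![a, b, f, e]`.
def bridgeLeftVecs (R : Type*) [Zero R] [One R] (m n : ℕ) : Fin 4 → Fin (m + n) → R :=
  ![bridgeCellVec m n 1 1 0 0, bridgeCellVec m n 0 0 1 1, bridgeCellVec m n 0 1 0 0,
    bridgeCellVec m n 0 0 1 0]

def bridgeRightVecs (R : Type*) [Zero R] [One R] (m n : ℕ) : Fin 4 → Fin (m + n) → R :=
  ![bridgeCellVec m n 1 1 0 0, bridgeCellVec m n 0 0 1 1, bridgeCellVec m n 0 0 1 0,
    bridgeCellVec m n 0 1 0 0]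

theorem adjMatrix_bridgeGraph_eq_neg_one_sub_sum {R : Type*} [CommRing R] (m n : ℕ) :
    (bridgeGraph m n).adjMatrix R =
      -(1 - ∑ k, vecMulVec (bridgeLeftVecs R m n k) (bridgeRightVecs R m n k)) := by
  ext i j
  rw [SimpleGraph.adjMatrix_apply]
  simp only [neg_sub, Matrix.sub_apply, Fin.sum_univ_four, Matrix.add_apply, vecMulVec_apply,
    bridgeLeftVecs, bridgeRightVecs, bridgeCellVec, bridgeCellFun, one_apply, Matrix.cons_val,
    bridgeGraph, SimpleGraph.fromRel_adj, ne_eq, ← Fin.val_inj]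
  split_ifs <;> first | omega | simp

def bridgeGram {R : Type*} [Zero R] [One R] (a b : R) : Matrix (Fin 4) (Fin 4) R :=
  !![a, 0, 1, 0; 0, b, 0, 1; 0, 1, 0, 1; 1, 0, 1, 0]

theorem of_bridgeRightVecs_dotProduct_bridgeLeftVecs {R : Type*} [CommRing R] {m n : ℕ}
    (hm : 1 ≤ m) (hn : 1 ≤ n) :
    (of fun k l => bridgeRightVecs R m n k ⬝ᵥ bridgeLeftVecs R m n l) =
      bridgeGram (m : R) n := by
  ext k l
  fin_cases k <;> fin_cases l <;>
    simp [bridgeGram, bridgeLeftVecs, bridgeRightVecs, bridgeCellVec_dotProduct hm hn,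
      Nat.cast_sub hm, Nat.cast_sub hn]

theorem det_one_sub_bridgeGram {R : Type*} [CommRing R] (a b : R) :
    det (1 - bridgeGram a b) = a + b - 3 := by
  simp [bridgeGram, det_succ_row_zero, Fin.sum_univ_succ, one_apply, Fin.succAbove]
  ring

theorem det_adjMatrix_bridgeGraph {R : Type*} [CommRing R] {m n : ℕ} (hm : 1 ≤ m)
    (hn : 1 ≤ n) :
    ((bridgeGraph m n).adjMatrix R).det = (-1) ^ (m + n) * (((m + n : ℕ) : R) - 3) := by
  rw [adjMatrix_bridgeGraph_eq_neg_one_sub_sum, det_neg, det_one_sub_sum_vecMulVec,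
    of_bridgeRightVecs_dotProduct_bridgeLeftVecs hm hn, det_one_sub_bridgeGram,
    Fintype.card_fin, Nat.cast_add]

theorem neg_one_pow_mul_sub_three_injective {R : Type*} [Ring R] [CharZero R] :
    Function.Injective fun N : ℕ => (-1 : R) ^ N * ((N : R) - 3) := by
  intro a b (h : (-1 : R) ^ a * ((a : R) - 3) = (-1) ^ b * ((b : R) - 3))
  have hℤ : (-1 : ℤ) ^ a * ((a : ℤ) - 3) = (-1) ^ b * ((b : ℤ) - 3) := by exact_mod_cast h
  rcases Nat.even_or_odd a with ha | ha <;> rcases Nat.even_or_odd b with hb | hb <;>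
    simp only [ha.neg_one_pow, hb.neg_one_pow, one_mul, neg_one_mul] at hℤ <;>
    grind

/-- For all integers `m, n, m′, n′ ≥ 1`,
`det A(B_{m,n}) = det A(B_{m′,n′})` if and only if `m + n = m′ + n′`. -/
theorem det_adjMatrix_bridgeGraph_eq_iff (m n m' n' : ℕ)
    (hm : 1 ≤ m) (hn : 1 ≤ n) (hm' : 1 ≤ m') (hn' : 1 ≤ n') :
    ((bridgeGraph m n).adjMatrix ℝ).det = ((bridgeGraph m' n').adjMatrix ℝ).det ↔
      m + n = m' + n' := by
  rw [det_adjMatrix_bridgeGraph hm hn, det_adjMatrix_bridgeGraph hm' hn']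
  exact neg_one_pow_mul_sub_three_injective.eq_iff
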